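/- arXiv:1211.4990 — 3 statements merged into one kernel-verified Lean document; each statement's English description precedes it below -/
import Mathlib

section
/- Let A be a unital C*-algebra, let φ be a positive linear functional on A with φ(1) ≤ 1, and let p, q ∈ A be projections. Then φ(q) ≤ φ(p) + 7·(φ( ((1−p) q (1−p))² ))^{1/4}. -/
/-!
Put `r = 1 - p` and `x = r q r`, and split `q = p q p + p q r + r q p + r q r`. The corner
`p q p ≤ p` contributes at most `φ(p)`. Cauchy–Schwarz for `(a, b) ↦ φ(a⋆ b)`, applied to `q p`
and `q r`, bounds each off-diagonal term by `√φ(x)`, and applied to `x` and `1` gives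
`φ(x)² ≤ φ(x²)`. As `φ(x) ≤ 1`, this yields the bound with constant `3` instead of `7`.
-/

open ComplexOrder

lemma Real.sqrt_le_rpow_one_div_four {s t : ℝ} (hs : 0 ≤ s) (hst : s ^ 2 ≤ t) :
    √s ≤ t ^ (1 / 4 : ℝ) := by
  calc √s = (s ^ 2) ^ (1 / 4 : ℝ) := by
        rw [Real.sqrt_eq_rpow, ← Real.rpow_natCast_mul hs]; norm_num
    _ ≤ t ^ (1 / 4 : ℝ) := by gcongr

namespace PositiveLinearMap

section Ordered

variable {E : Type*} [AddCommMonoid E] [PartialOrder E] [Module ℂ E] (f : E →ₚ[ℂ] ℂ)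

lemma re_apply_mono {a b : E} (h : a ≤ b) : (f a).re ≤ (f b).re :=
  Complex.re_le_re (OrderHomClass.mono f h)

lemma re_apply_nonneg {a : E} (h : 0 ≤ a) : 0 ≤ (f a).re := by
  simpa using f.re_apply_mono h

end Ordered

section NonUnital

variable {A : Type*} [NonUnitalCStarAlgebra A] [PartialOrder A] [StarOrderedRing A]
  (f : A →ₚ[ℂ] ℂ)

/-- Cauchy–Schwarz in the GNS space of `f`. -/
lemma norm_apply_star_mul_sq_le (a b : A) :
    ‖f (star a * b)‖ ^ 2 ≤ (f (star a * a)).re * (f (star b * b)).re := by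
  have h := norm_inner_le_norm (𝕜 := ℂ) (f.toPreGNS a) (f.toPreGNS b)
  rw [preGNS_inner_def, preGNS_norm_def, preGNS_norm_def] at h
  calc ‖f (star a * b)‖ ^ 2 ≤ (√(f (star a * a)).re * √(f (star b * b)).re) ^ 2 := by
        gcongr; exact h
    _ = _ := by
      rw [mul_pow, Real.sq_sqrt (f.re_apply_nonneg (star_mul_self_nonneg a)),
        Real.sq_sqrt (f.re_apply_nonneg (star_mul_self_nonneg b))]

lemma norm_apply_mul_mul_le {q : A} (hq : IsStarProjection q) {a b : A}
    (ha : IsSelfAdjoint a) (hb : IsSelfAdjoint b) :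
    ‖f (a * q * b)‖ ≤ √(f (a * q * a)).re * √(f (b * q * b)).re := by
  have hstar (c d : A) (hc : IsSelfAdjoint c) : star (q * c) * (q * d) = c * q * d := by
    rw [star_mul, hq.isSelfAdjoint.star_eq, hc.star_eq, mul_assoc, ← mul_assoc q q d,
      hq.isIdempotentElem.eq, mul_assoc]
  have h := f.norm_apply_star_mul_sq_le (q * a) (q * b)
  rw [hstar a b ha, hstar a a ha, hstar b b hb] at h
  rw [← Real.sqrt_mul (f.re_apply_nonneg (ha.conjugate_nonneg hq.nonneg))]
  exact Real.le_sqrt_of_sq_le h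

end NonUnital

section Unital

variable {A : Type*} [CStarAlgebra A] [PartialOrder A] [StarOrderedRing A] (f : A →ₚ[ℂ] ℂ)

lemma sq_re_apply_le {a : A} (ha : IsSelfAdjoint a) :
    (f a).re ^ 2 ≤ (f (a ^ 2)).re * (f 1).re := by
  have h := f.norm_apply_star_mul_sq_le a 1
  rw [ha.star_eq, star_one, mul_one, mul_one, ← sq] at h
  calc (f a).re ^ 2 = |(f a).re| ^ 2 := (sq_abs _).symm
    _ ≤ ‖f a‖ ^ 2 := by gcongr; exact Complex.abs_re_le_norm _
    _ ≤ _ := h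

variable {f} (hf : (f 1).re ≤ 1) {p q : A} (hp : IsStarProjection p) (hq : IsStarProjection q)
include hf hp hq

lemma re_apply_le_add_two_sqrt_add :
    (f q).re ≤ (f p).re + 2 * √(f ((1 - p) * q * (1 - p))).re
      + (f ((1 - p) * q * (1 - p))).re := by
  set r := 1 - p
  have hr : IsStarProjection r := hp.one_sub
  have hdecomp : q = p * q * p + p * q * r + r * q * p + r * q * r := by
    simp only [r]; noncomm_ring
  have hpqp : (f (p * q * p)).re ≤ (f p).re := by
    simpa [hp.isIdempotentElem.eq] using
      f.re_apply_mono (hp.isSelfAdjoint.conjugate_le_conjugate hq.le_one)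
  have hpqp_one : √(f (p * q * p)).re ≤ 1 :=
    Real.sqrt_le_one.mpr (hpqp.trans ((f.re_apply_mono hp.le_one).trans hf))
  have hcross₁ : (f (p * q * r)).re ≤ √(f (r * q * r)).re := calc
    _ ≤ ‖f (p * q * r)‖ := Complex.re_le_norm _
    _ ≤ √(f (p * q * p)).re * √(f (r * q * r)).re :=
      f.norm_apply_mul_mul_le hq hp.isSelfAdjoint hr.isSelfAdjoint
    _ ≤ √(f (r * q * r)).re := mul_le_of_le_one_left (Real.sqrt_nonneg _) hpqp_one
  have hcross₂ : (f (r * q * p)).re ≤ √(f (r * q * r)).re := calc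
    _ ≤ ‖f (r * q * p)‖ := Complex.re_le_norm _
    _ ≤ √(f (r * q * r)).re * √(f (p * q * p)).re :=
      f.norm_apply_mul_mul_le hq hr.isSelfAdjoint hp.isSelfAdjoint
    _ ≤ √(f (r * q * r)).re := mul_le_of_le_one_right (Real.sqrt_nonneg _) hpqp_one
  have hsplit : (f q).re = (f (p * q * p)).re + (f (p * q * r)).re + (f (r * q * p)).re
      + (f (r * q * r)).re := by
    conv_lhs => rw [hdecomp]
    simp only [map_add, Complex.add_re]
  linarith

lemma re_apply_le_add_three_mul_rpow :
    (f q).re ≤ (f p).re + 3 * (f (((1 - p) * q * (1 - p)) ^ 2)).re ^ (1 / 4 : ℝ) := by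
  set x := (1 - p) * q * (1 - p)
  have hx : IsSelfAdjoint x := hq.isSelfAdjoint.conjugate_self hp.one_sub.isSelfAdjoint
  have hx_nonneg : 0 ≤ (f x).re :=
    f.re_apply_nonneg (hp.one_sub.isSelfAdjoint.conjugate_nonneg hq.nonneg)
  have hx_le_one : (f x).re ≤ 1 := by
    have hx_le : x ≤ 1 - p := by
      simpa [hp.one_sub.isIdempotentElem.eq] using
        hp.one_sub.isSelfAdjoint.conjugate_le_conjugate hq.le_one
    exact (f.re_apply_mono (hx_le.trans hp.one_sub.le_one)).trans hf
  have hsq : (f x).re ^ 2 ≤ (f (x ^ 2)).re :=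
    (f.sq_re_apply_le hx).trans <| mul_le_of_le_one_right
      (f.re_apply_nonneg (by simpa [sq] using hx.mul_self_nonneg)) hf
  have hsqrt := Real.sqrt_le_rpow_one_div_four hx_nonneg hsq
  have hx_le_sqrt : (f x).re ≤ √(f x).re := Real.le_sqrt_of_sq_le (by nlinarith)
  linarith [f.re_apply_le_add_two_sqrt_add hf hp hq]

end Unital

end PositiveLinearMap

/-- For a positive linear functional `φ` with `φ(1) ≤ 1` on a unital C*-algebra and
projections `p, q`: `φ(q) ≤ φ(p) + 7·(φ(((1−p) q (1−p))²))^{1/4}`. -/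
theorem stmt6 {A : Type*} [CStarAlgebra A] [PartialOrder A] [StarOrderedRing A]
    (φ : A →ₗ[ℂ] ℂ) (hφ : ∀ b : A, 0 ≤ b → 0 ≤ φ b) (hφ1 : φ 1 ≤ 1)
    (p : A) (hp_sa : p = star p) (hp_idem : p * p = p)
    (q : A) (hq_sa : q = star q) (hq_idem : q * q = q) :
    (φ q).re ≤ (φ p).re + 7 * (φ (((1 - p) * q * (1 - p)) ^ 2)).re ^ ((1 : ℝ) / 4) := by
  have hp : IsStarProjection p := ⟨hp_idem, hp_sa.symm⟩
  have hq : IsStarProjection q := ⟨hq_idem, hq_sa.symm⟩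
  have h : (φ q).re ≤ (φ p).re + 3 * (φ (((1 - p) * q * (1 - p)) ^ 2)).re ^ ((1 : ℝ) / 4) :=
    (PositiveLinearMap.mk₀ φ hφ).re_apply_le_add_three_mul_rpow
      ((Complex.re_le_re hφ1).trans_eq Complex.one_re) hp hq
  have hx : IsSelfAdjoint ((1 - p) * q * (1 - p)) :=
    hq.isSelfAdjoint.conjugate_self hp.one_sub.isSelfAdjoint
  have hrpow : 0 ≤ (φ (((1 - p) * q * (1 - p)) ^ 2)).re ^ ((1 : ℝ) / 4) :=
    Real.rpow_nonneg (Complex.re_le_re (hφ _ (by simpa [sq] using hx.mul_self_nonneg))) _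
  linarith
end

section
/- Let A be a unital C*-algebra, let φ₁, φ₂, φ₃, φ₄ be positive linear functionals on A with φ_j(1) ≤ 1 for each j, and set φ := φ₁ − φ₂ + i(φ₃ − φ₄) and ψ := φ₁ + φ₂ + φ₃ + φ₄. Let p ∈ A be a projection and a ∈ A with 0 ≤ a ≤ 1. Then for every x ∈ A with ‖x‖ ≤ 1, |φ(p a x a p)| ≤ 4·(ψ((p a p)²))^{1/2}. -/
/-!
Each positive functional `f` with `f 1 ≤ 1` is handled separately, through the Cauchy–Schwarz
inequality `|f (u* v)|² ≤ f (u* u) f (v* v)` of its GNS semi-inner product. Writing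
`p a x a p = y* x y` with `y = a p`, one gets `|f (p a x a p)| ≤ f (p a² p) ≤ f (p a p)`, since
`x* x ≤ 1` and `a² ≤ a`; a second application with `v = 1` gives
`f (p a p) ≤ f ((p a p)²)^{1/2}`. Each of the four terms of `φ` is then at most `ψ((p a p)²)^{1/2}`.
-/

open ComplexOrder

namespace PositiveLinearMap

lemma re_apply_mono_s12 {E : Type*} [AddCommMonoid E] [PartialOrder E] [Module ℂ E]
    (f : E →ₚ[ℂ] ℂ) {b c : E} (h : b ≤ c) : (f b).re ≤ (f c).re :=
  Complex.re_le_re (OrderHomClass.mono f h)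

variable {A : Type*} [CStarAlgebra A] [PartialOrder A] [StarOrderedRing A] (f : A →ₚ[ℂ] ℂ)

lemma norm_apply_star_mul_le (u v : A) :
    ‖f (star u * v)‖ ≤ √(f (star u * u)).re * √(f (star v * v)).re :=
  norm_inner_le_norm (𝕜 := ℂ) (f.toPreGNS u) (f.toPreGNS v)

lemma norm_apply_star_mul_mul_le (y : A) {x : A} (hx : ‖x‖ ≤ 1) :
    ‖f (star y * x * y)‖ ≤ (f (star y * y)).re := by
  have hxx : star x * x ≤ 1 := by
    rw [← CStarAlgebra.norm_le_one_iff_of_nonneg _ (star_mul_self_nonneg x),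
      CStarRing.norm_star_mul_self]
    exact mul_le_one₀ hx (norm_nonneg x) hx
  have hxy : (f (star (x * y) * (x * y))).re ≤ (f (star y * y)).re := by
    apply f.re_apply_mono_s12
    simpa only [star_mul, mul_assoc, mul_one] using star_left_conjugate_le_conjugate hxx y
  calc ‖f (star y * x * y)‖ = ‖f (star y * (x * y))‖ := by rw [mul_assoc]
    _ ≤ √(f (star y * y)).re * √(f (star (x * y) * (x * y))).re := f.norm_apply_star_mul_le _ _
    _ ≤ √(f (star y * y)).re * √(f (star y * y)).re := by gcongr
    _ = (f (star y * y)).re :=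
      Real.mul_self_sqrt (Complex.nonneg_iff.mp (f.map_nonneg (star_mul_self_nonneg y))).1

lemma norm_apply_le_sqrt_apply_sq (hf1 : f 1 ≤ 1) {b : A} (hb : IsSelfAdjoint b) :
    ‖f b‖ ≤ √(f (b ^ 2)).re := by
  have h1 : √(f 1).re ≤ 1 := Real.sqrt_le_one.mpr (Complex.re_le_re hf1)
  calc ‖f b‖ = ‖f (star b * 1)‖ := by rw [hb.star_eq, mul_one]
    _ ≤ √(f (star b * b)).re * √(f (star 1 * 1)).re := f.norm_apply_star_mul_le _ _
    _ ≤ √(f (b ^ 2)).re := by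
      rw [hb.star_eq, ← sq, star_one, one_mul]
      exact mul_le_of_le_one_right (Real.sqrt_nonneg _) h1

lemma norm_apply_mul_mul_mul_mul_le (hf1 : f 1 ≤ 1) {p : A} (hp : IsSelfAdjoint p) {a : A}
    (ha0 : 0 ≤ a) (ha1 : a ≤ 1) {x : A} (hx : ‖x‖ ≤ 1) :
    ‖f (p * a * x * a * p)‖ ≤ √(f ((p * a * p) ^ 2)).re := by
  have hap : star (a * p) = p * a := by
    rw [star_mul, hp.star_eq, (IsSelfAdjoint.of_nonneg ha0).star_eq]
  have haa : a * a ≤ a := by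
    simpa only [sq, pow_one] using CStarAlgebra.pow_antitone ha0 ha1 one_le_two
  calc ‖f (p * a * x * a * p)‖ = ‖f (star (a * p) * x * (a * p))‖ := by
        rw [hap]; simp only [mul_assoc]
    _ ≤ (f (star (a * p) * (a * p))).re := f.norm_apply_star_mul_mul_le _ hx
    _ ≤ (f (p * a * p)).re := by
      apply f.re_apply_mono_s12
      simpa only [hap, mul_assoc] using hp.conjugate_le_conjugate haa
    _ ≤ ‖f (p * a * p)‖ := Complex.re_le_norm _
    _ ≤ √(f ((p * a * p) ^ 2)).re :=
      f.norm_apply_le_sqrt_apply_sq hf1 ((IsSelfAdjoint.of_nonneg ha0).conjugate_self hp)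

end PositiveLinearMap

lemma norm_sub_add_I_mul_sub_le (z₁ z₂ z₃ z₄ : ℂ) :
    ‖z₁ - z₂ + Complex.I * (z₃ - z₄)‖ ≤ ‖z₁‖ + ‖z₂‖ + ‖z₃‖ + ‖z₄‖ :=
  calc ‖z₁ - z₂ + Complex.I * (z₃ - z₄)‖ ≤ ‖z₁ - z₂‖ + ‖z₃ - z₄‖ := by
        simpa only [norm_mul, Complex.norm_I, one_mul] using
          norm_add_le (z₁ - z₂) (Complex.I * (z₃ - z₄))
    _ ≤ ‖z₁‖ + ‖z₂‖ + (‖z₃‖ + ‖z₄‖) := add_le_add (norm_sub_le _ _) (norm_sub_le _ _)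
    _ = ‖z₁‖ + ‖z₂‖ + ‖z₃‖ + ‖z₄‖ := by ring

theorem stmt12_general {A : Type*} [CStarAlgebra A] [PartialOrder A] [StarOrderedRing A]
    (φ₁ φ₂ φ₃ φ₄ : A →ₗ[ℂ] ℂ)
    (h₁ : ∀ b : A, 0 ≤ b → 0 ≤ φ₁ b) (h₂ : ∀ b : A, 0 ≤ b → 0 ≤ φ₂ b)
    (h₃ : ∀ b : A, 0 ≤ b → 0 ≤ φ₃ b) (h₄ : ∀ b : A, 0 ≤ b → 0 ≤ φ₄ b)
    (h₁1 : φ₁ 1 ≤ 1) (h₂1 : φ₂ 1 ≤ 1) (h₃1 : φ₃ 1 ≤ 1) (h₄1 : φ₄ 1 ≤ 1)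
    (p : A) (hp_sa : p = star p)
    (a : A) (ha0 : 0 ≤ a) (ha1 : a ≤ 1) :
    ∀ x : A, ‖x‖ ≤ 1 →
      ‖φ₁ (p * a * x * a * p) - φ₂ (p * a * x * a * p)
          + Complex.I * (φ₃ (p * a * x * a * p) - φ₄ (p * a * x * a * p))‖
        ≤ 4 * ((φ₁ ((p * a * p) ^ 2) + φ₂ ((p * a * p) ^ 2) + φ₃ ((p * a * p) ^ 2)
            + φ₄ ((p * a * p) ^ 2)).re) ^ ((1 : ℝ) / 2) := by
  intro x hx
  have hp : IsSelfAdjoint p := hp_sa.symm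
  have hb : 0 ≤ (p * a * p) ^ 2 := ((IsSelfAdjoint.of_nonneg ha0).conjugate_self hp).sq_nonneg
  have bound (φ : A →ₗ[ℂ] ℂ) (hφ : ∀ b : A, 0 ≤ b → 0 ≤ φ b) (hφ1 : φ 1 ≤ 1) :
      ‖φ (p * a * x * a * p)‖ ≤ √(φ ((p * a * p) ^ 2)).re :=
    (PositiveLinearMap.mk₀ φ hφ).norm_apply_mul_mul_mul_mul_le hφ1 hp ha0 ha1 hx
  have r₁ := (Complex.nonneg_iff.mp (h₁ _ hb)).1
  have r₂ := (Complex.nonneg_iff.mp (h₂ _ hb)).1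
  have r₃ := (Complex.nonneg_iff.mp (h₃ _ hb)).1
  have r₄ := (Complex.nonneg_iff.mp (h₄ _ hb)).1
  rw [← Real.sqrt_eq_rpow, Complex.add_re, Complex.add_re, Complex.add_re]
  set S := (φ₁ ((p * a * p) ^ 2)).re + (φ₂ ((p * a * p) ^ 2)).re + (φ₃ ((p * a * p) ^ 2)).re
    + (φ₄ ((p * a * p) ^ 2)).re
  calc _ ≤ _ := norm_sub_add_I_mul_sub_le _ _ _ _
    _ ≤ √S + √S + √S + √S := by
      gcongr
      exacts [(bound φ₁ h₁ h₁1).trans (Real.sqrt_le_sqrt (by linarith)),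
        (bound φ₂ h₂ h₂1).trans (Real.sqrt_le_sqrt (by linarith)),
        (bound φ₃ h₃ h₃1).trans (Real.sqrt_le_sqrt (by linarith)),
        (bound φ₄ h₄ h₄1).trans (Real.sqrt_le_sqrt (by linarith))]
    _ = 4 * √S := by ring

/-- Let `φ₁, φ₂, φ₃, φ₄` be positive linear functionals with `φ_j(1) ≤ 1` on a unital
C*-algebra, `φ := φ₁ − φ₂ + i(φ₃ − φ₄)`, `ψ := φ₁ + φ₂ + φ₃ + φ₄`, `p` a projection and
`0 ≤ a ≤ 1`.  Then `|φ(p a x a p)| ≤ 4·(ψ((p a p)²))^{1/2}` for every `x` with `‖x‖ ≤ 1`. -/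
theorem stmt12 {A : Type*} [CStarAlgebra A] [PartialOrder A] [StarOrderedRing A]
    (φ₁ φ₂ φ₃ φ₄ : A →ₗ[ℂ] ℂ)
    (h₁ : ∀ b : A, 0 ≤ b → 0 ≤ φ₁ b) (h₂ : ∀ b : A, 0 ≤ b → 0 ≤ φ₂ b)
    (h₃ : ∀ b : A, 0 ≤ b → 0 ≤ φ₃ b) (h₄ : ∀ b : A, 0 ≤ b → 0 ≤ φ₄ b)
    (h₁1 : φ₁ 1 ≤ 1) (h₂1 : φ₂ 1 ≤ 1) (h₃1 : φ₃ 1 ≤ 1) (h₄1 : φ₄ 1 ≤ 1)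
    (p : A) (hp_sa : p = star p) (hp_idem : p * p = p)
    (a : A) (ha0 : 0 ≤ a) (ha1 : a ≤ 1) :
    ∀ x : A, ‖x‖ ≤ 1 →
      ‖φ₁ (p * a * x * a * p) - φ₂ (p * a * x * a * p)
          + Complex.I * (φ₃ (p * a * x * a * p) - φ₄ (p * a * x * a * p))‖
        ≤ 4 * ((φ₁ ((p * a * p) ^ 2) + φ₂ ((p * a * p) ^ 2) + φ₃ ((p * a * p) ^ 2)
            + φ₄ ((p * a * p) ^ 2)).re) ^ ((1 : ℝ) / 2) :=
  stmt12_general φ₁ φ₂ φ₃ φ₄ h₁ h₂ h₃ h₄ h₁1 h₂1 h₃1 h₄1 p hp_sa a ha0 ha1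
end

section
/- Let A be a unital C*-algebra, let φ₁, φ₂, φ₃, φ₄ be positive linear functionals on A with φ_j(1) ≤ 1 for each j, and set φ := φ₁ − φ₂ + i(φ₃ − φ₄) and ψ := φ₁ + φ₂ + φ₃ + φ₄. Let e, f ∈ A be projections with f ≤ e (i.e. e f = f e = f). Then for every x ∈ A with ‖x‖ ≤ 1, |φ(e x e) − φ((e−f) x (e−f))| ≤ 28·(ψ(f))^{1/4}. -/
/-!
Since `e x e - (e - f) x (e - f) = f (x e) + ((e - f) x) f`, it suffices to bound `φ (f y)` and
`φ (y f)` for a positive functional `φ` with `φ 1 ≤ 1`. The Cauchy–Schwarz inequality for the GNS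
semi-inner product `⟪a, b⟫ = φ (a⋆ b)` gives `|φ (f y)| ≤ φ(f)^{1/2} φ(y⋆ y)^{1/2} ≤ φ(f)^{1/2} ‖y‖`,
so, as `‖x e‖ ≤ 1` and `‖(e - f) x‖ ≤ 2`, each `φⱼ` contributes at most `3 φⱼ(f)^{1/2}`. Finally
`ψ(f) ≤ 4`, so `12 ψ(f)^{1/2} ≤ 24 ψ(f)^{1/4}`.
-/

open ComplexOrder

namespace PositiveLinearMap

variable {A : Type*} [CStarAlgebra A] [PartialOrder A] [StarOrderedRing A] (φ : A →ₚ[ℂ] ℂ)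

theorem norm_apply_star_mul_le_s14 (a b : A) :
    ‖φ (star a * b)‖ ≤ √(φ (star a * a)).re * √(φ (star b * b)).re :=
  norm_inner_le_norm (𝕜 := ℂ) (φ.toPreGNS a) (φ.toPreGNS b)

theorem re_apply_star_mul_self_le (b : A) : (φ (star b * b)).re ≤ ‖b‖ ^ 2 * (φ 1).re := by
  have h := (Complex.le_def.1 <|
    OrderHomClass.mono φ (CStarAlgebra.star_mul_le_algebraMap_norm_sq (a := b))).1
  rwa [Algebra.algebraMap_eq_smul_one, φ.map_smul_of_tower, Complex.smul_re, smul_eq_mul] at h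

theorem norm_apply_mul_le_of_isStarProjection {p : A} (hp : IsStarProjection p) (y : A) :
    ‖φ (p * y)‖ ≤ √(φ p).re * (‖y‖ * √(φ 1).re) := by
  have h := φ.norm_apply_star_mul_le_s14 p y
  rw [hp.isSelfAdjoint.star_eq, hp.isIdempotentElem.eq] at h
  refine h.trans (mul_le_mul_of_nonneg_left ?_ (Real.sqrt_nonneg _))
  calc √(φ (star y * y)).re ≤ √(‖y‖ ^ 2 * (φ 1).re) :=
        Real.sqrt_le_sqrt (φ.re_apply_star_mul_self_le y)
    _ = ‖y‖ * √(φ 1).re := by rw [Real.sqrt_mul (sq_nonneg _), Real.sqrt_sq (norm_nonneg _)]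

theorem norm_apply_mul_le_of_isStarProjection' {p : A} (hp : IsStarProjection p) (y : A) :
    ‖φ (y * p)‖ ≤ √(φ p).re * (‖y‖ * √(φ 1).re) := by
  have h := φ.norm_apply_mul_le_of_isStarProjection hp (star y)
  rwa [norm_star, ← hp.isSelfAdjoint.star_eq, ← star_mul, map_star, norm_star,
    hp.isSelfAdjoint.star_eq] at h

theorem norm_apply_compress_sub_compress_le {e p : A} (he : IsStarProjection e)
    (hp : IsStarProjection p) (x : A) :
    ‖φ (e * x * e) - φ ((e - p) * x * (e - p))‖ ≤ 3 * √(φ p).re * (‖x‖ * √(φ 1).re) := by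
  have hxe : ‖x * e‖ ≤ ‖x‖ :=
    (norm_mul_le _ _).trans (mul_le_of_le_one_right (norm_nonneg _) (he.norm_le e))
  have hepx : ‖(e - p) * x‖ ≤ 2 * ‖x‖ := by
    refine (norm_mul_le _ _).trans (mul_le_mul_of_nonneg_right ?_ (norm_nonneg _))
    linarith [norm_sub_le e p, he.norm_le e, hp.norm_le p]
  have hsplit : e * x * e - (e - p) * x * (e - p) = p * (x * e) + (e - p) * x * p := by
    noncomm_ring
  rw [← map_sub, hsplit, map_add]
  have hc : 0 ≤ √(φ p).re * √(φ 1).re := by positivity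
  calc ‖φ (p * (x * e)) + φ ((e - p) * x * p)‖
      ≤ √(φ p).re * (‖x * e‖ * √(φ 1).re) + √(φ p).re * (‖(e - p) * x‖ * √(φ 1).re) :=
        (norm_add_le _ _).trans (add_le_add
          (φ.norm_apply_mul_le_of_isStarProjection hp _)
          (φ.norm_apply_mul_le_of_isStarProjection' hp _))
    _ ≤ 3 * √(φ p).re * (‖x‖ * √(φ 1).re) := by nlinarith

theorem re_apply_le_one_of_isStarProjection (hφ1 : φ 1 ≤ 1) {p : A} (hp : IsStarProjection p) :
    (φ p).re ≤ 1 :=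
  (Complex.le_def.1 ((OrderHomClass.mono φ hp.le_one).trans hφ1)).1.trans_eq Complex.one_re

theorem norm_apply_compress_sub_compress_le_of_norm_le_one (hφ1 : φ 1 ≤ 1) {e p : A}
    (he : IsStarProjection e) (hp : IsStarProjection p) {x : A} (hx : ‖x‖ ≤ 1) :
    ‖φ (e * x * e) - φ ((e - p) * x * (e - p))‖ ≤ 3 * √(φ p).re := by
  have h1 : √(φ 1).re ≤ 1 := Real.sqrt_le_one.2 ((Complex.le_def.1 hφ1).1.trans_eq Complex.one_re)
  calc _ ≤ 3 * √(φ p).re * (‖x‖ * √(φ 1).re) := φ.norm_apply_compress_sub_compress_le he hp x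
    _ ≤ 3 * √(φ p).re * (1 * 1) := by gcongr
    _ = 3 * √(φ p).re := by ring

end PositiveLinearMap

theorem Real.sqrt_le_two_mul_rpow_one_div_four {t : ℝ} (h₀ : 0 ≤ t) (h₁₆ : t ≤ 16) :
    √t ≤ 2 * t ^ ((1 : ℝ) / 4) := by
  have hq : t ^ ((1 : ℝ) / 4) ≤ 2 := by
    calc t ^ ((1 : ℝ) / 4) ≤ (2 ^ (4 : ℝ)) ^ ((1 : ℝ) / 4) :=
          Real.rpow_le_rpow h₀ (by norm_num [h₁₆]) (by norm_num)
      _ = 2 := by rw [← Real.rpow_mul (by norm_num)]; norm_num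
  have hsq : √t = t ^ ((1 : ℝ) / 4) * t ^ ((1 : ℝ) / 4) := by
    rw [Real.sqrt_eq_rpow, ← Real.rpow_add' h₀ (by norm_num)]
    norm_num
  rw [hsq]
  exact mul_le_mul_of_nonneg_right hq (Real.rpow_nonneg h₀ _)

theorem Complex.norm_sub_add_I_mul_sub_le (a b c d : ℂ) :
    ‖a - b + I * (c - d)‖ ≤ ‖a‖ + ‖b‖ + ‖c‖ + ‖d‖ := by
  calc ‖a - b + I * (c - d)‖ ≤ ‖a - b‖ + ‖c - d‖ := by
        simpa using norm_add_le (a - b) (I * (c - d))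
    _ ≤ ‖a‖ + ‖b‖ + ‖c‖ + ‖d‖ := by linarith [norm_sub_le a b, norm_sub_le c d]

theorem stmt14_general {A : Type*} [CStarAlgebra A] [PartialOrder A] [StarOrderedRing A]
    (φ₁ φ₂ φ₃ φ₄ : A →ₗ[ℂ] ℂ)
    (h₁ : ∀ b : A, 0 ≤ b → 0 ≤ φ₁ b) (h₂ : ∀ b : A, 0 ≤ b → 0 ≤ φ₂ b)
    (h₃ : ∀ b : A, 0 ≤ b → 0 ≤ φ₃ b) (h₄ : ∀ b : A, 0 ≤ b → 0 ≤ φ₄ b)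
    (h₁1 : φ₁ 1 ≤ 1) (h₂1 : φ₂ 1 ≤ 1) (h₃1 : φ₃ 1 ≤ 1) (h₄1 : φ₄ 1 ≤ 1)
    (e f : A) (he_sa : e = star e) (he_idem : e * e = e)
    (hf_sa : f = star f) (hf_idem : f * f = f) :
    ∀ x : A, ‖x‖ ≤ 1 →
      ‖((φ₁ (e * x * e) - φ₂ (e * x * e)
            + Complex.I * (φ₃ (e * x * e) - φ₄ (e * x * e)))
          - (φ₁ ((e - f) * x * (e - f)) - φ₂ ((e - f) * x * (e - f))
            + Complex.I * (φ₃ ((e - f) * x * (e - f)) - φ₄ ((e - f) * x * (e - f)))))‖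
        ≤ 28 * ((φ₁ f + φ₂ f + φ₃ f + φ₄ f).re) ^ ((1 : ℝ) / 4) := by
  intro x hx
  have he : IsStarProjection e := ⟨he_idem, he_sa.symm⟩
  have hf : IsStarProjection f := ⟨hf_idem, hf_sa.symm⟩
  set T := (φ₁ f + φ₂ f + φ₃ f + φ₄ f).re
  have hT : T = (φ₁ f).re + (φ₂ f).re + (φ₃ f).re + (φ₄ f).re := by simp [T]
  have hf_re : ∀ φ : A →ₗ[ℂ] ℂ, (∀ b : A, 0 ≤ b → 0 ≤ φ b) → φ 1 ≤ 1 →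
      0 ≤ (φ f).re ∧ (φ f).re ≤ 1 := fun φ hφ hφ1 =>
    ⟨(Complex.nonneg_iff.1 (hφ f hf.nonneg)).1,
      (PositiveLinearMap.mk₀ φ hφ).re_apply_le_one_of_isStarProjection hφ1 hf⟩
  have hdiff : ∀ φ : A →ₗ[ℂ] ℂ, (∀ b : A, 0 ≤ b → 0 ≤ φ b) → φ 1 ≤ 1 → (φ f).re ≤ T →
      ‖φ (e * x * e) - φ ((e - f) * x * (e - f))‖ ≤ 3 * √T := fun φ hφ hφ1 hφT =>
    ((PositiveLinearMap.mk₀ φ hφ).norm_apply_compress_sub_compress_le_of_norm_le_one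
      hφ1 he hf hx).trans (by gcongr; exact hφT)
  obtain ⟨h₁0, h₁f⟩ := hf_re φ₁ h₁ h₁1
  obtain ⟨h₂0, h₂f⟩ := hf_re φ₂ h₂ h₂1
  obtain ⟨h₃0, h₃f⟩ := hf_re φ₃ h₃ h₃1
  obtain ⟨h₄0, h₄f⟩ := hf_re φ₄ h₄ h₄1
  have hT0 : 0 ≤ T := by linarith
  calc _ = ‖(φ₁ (e * x * e) - φ₁ ((e - f) * x * (e - f)))
          - (φ₂ (e * x * e) - φ₂ ((e - f) * x * (e - f)))
        + Complex.I * ((φ₃ (e * x * e) - φ₃ ((e - f) * x * (e - f)))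
          - (φ₄ (e * x * e) - φ₄ ((e - f) * x * (e - f))))‖ := by congr 1; ring
    _ ≤ 12 * √T := by
      refine (Complex.norm_sub_add_I_mul_sub_le _ _ _ _).trans ?_
      linarith [hdiff φ₁ h₁ h₁1 (by linarith), hdiff φ₂ h₂ h₂1 (by linarith),
        hdiff φ₃ h₃ h₃1 (by linarith), hdiff φ₄ h₄ h₄1 (by linarith)]
    _ ≤ 12 * (2 * T ^ ((1 : ℝ) / 4)) := by
      gcongr; exact Real.sqrt_le_two_mul_rpow_one_div_four hT0 (by linarith)
    _ ≤ 28 * T ^ ((1 : ℝ) / 4) := by nlinarith [Real.rpow_nonneg hT0 ((1 : ℝ) / 4)]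

/-- Let `φ₁, φ₂, φ₃, φ₄` be positive linear functionals with `φ_j(1) ≤ 1` on a unital
C*-algebra, `φ := φ₁ − φ₂ + i(φ₃ − φ₄)`, `ψ := φ₁ + φ₂ + φ₃ + φ₄`, and let `e, f` be
projections with `f ≤ e` (`e f = f e = f`).  Then for every `x` with `‖x‖ ≤ 1`,
`|φ(e x e) − φ((e−f) x (e−f))| ≤ 28·(ψ(f))^{1/4}`. -/
theorem stmt14 {A : Type*} [CStarAlgebra A] [PartialOrder A] [StarOrderedRing A]
    (φ₁ φ₂ φ₃ φ₄ : A →ₗ[ℂ] ℂ)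
    (h₁ : ∀ b : A, 0 ≤ b → 0 ≤ φ₁ b) (h₂ : ∀ b : A, 0 ≤ b → 0 ≤ φ₂ b)
    (h₃ : ∀ b : A, 0 ≤ b → 0 ≤ φ₃ b) (h₄ : ∀ b : A, 0 ≤ b → 0 ≤ φ₄ b)
    (h₁1 : φ₁ 1 ≤ 1) (h₂1 : φ₂ 1 ≤ 1) (h₃1 : φ₃ 1 ≤ 1) (h₄1 : φ₄ 1 ≤ 1)
    (e f : A) (he_sa : e = star e) (he_idem : e * e = e)
    (hf_sa : f = star f) (hf_idem : f * f = f)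
    (hef : e * f = f) (hfe : f * e = f) :
    ∀ x : A, ‖x‖ ≤ 1 →
      ‖((φ₁ (e * x * e) - φ₂ (e * x * e)
            + Complex.I * (φ₃ (e * x * e) - φ₄ (e * x * e)))
          - (φ₁ ((e - f) * x * (e - f)) - φ₂ ((e - f) * x * (e - f))
            + Complex.I * (φ₃ ((e - f) * x * (e - f)) - φ₄ ((e - f) * x * (e - f)))))‖
        ≤ 28 * ((φ₁ f + φ₂ f + φ₃ f + φ₄ f).re) ^ ((1 : ℝ) / 4) :=
  stmt14_general φ₁ φ₂ φ₃ φ₄ h₁ h₂ h₃ h₄ h₁1 h₂1 h₃1 h₄1 e f he_sa he_idem hf_sa hf_idem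
end
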